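/- For all x, y ∈ {o,b}, (x,y)-generic bisimilarity ≈_{(x,y)} satisfies the stuttering property: whenever t0 →τ t1 →τ ⋯ →τ tk and t0 ≈_{(x,y)} tk, then ti ≈_{(x,y)} tj for all 0 ≤ i, j ≤ k. -/
import Mathlib


namespace GamesBisim

/-- Parameter values `o` (ordinary) and `b` (branching) for generic bisimulations. -/
inductive XY | o | b
deriving DecidableEq

/-- The faces ☹ (frown) and ☺ (smile). -/
inductive Face | frown | smile
deriving DecidableEq

/-- Rewards: `*` (star) and `✓` (check). -/
inductive Rw | star | check
deriving DecidableEq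

/-- A labelled transition system with states `S`, actions `A` containing a
distinguished silent action `tau`, and a transition relation. -/
structure LTS (S : Type u) (A : Type v) where
  tau : A
  Trans : S → A → S → Prop

namespace LTS

variable {S : Type u} {A : Type v}

/-- A single silent (τ) step. -/
def TauStep (L : LTS S A) (s s' : S) : Prop := L.Trans s L.tau s'

/-- `↠`: the reflexive-transitive closure of the τ-step relation. -/
def TauStar (L : LTS S A) : S → S → Prop := Relation.ReflTransGen L.TauStep

/-- `↠⁺`: the transitive closure of the τ-step relation. -/
def TauPlus (L : LTS S A) : S → S → Prop := Relation.TransGen L.TauStep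

/-- An LTS is non-divergent if it admits no infinite sequence of τ-steps. -/
def NonDivergent (L : LTS S A) : Prop :=
  ¬ ∃ f : ℕ → S, ∀ i, L.TauStep (f i) (f (i + 1))

/-- A symmetric relation `R` is a branching bisimulation. -/
def IsBranchingBisim (L : LTS S A) (R : S → S → Prop) : Prop :=
  (∀ s t, R s t → R t s) ∧
  ∀ s t a s', R s t → L.Trans s a s' →
    (a = L.tau ∧ R s' t) ∨
    ∃ t1 t', L.TauStar t t1 ∧ L.Trans t1 a t' ∧ R s t1 ∧ R s' t'

/-- Branching bisimilarity `≈b`. -/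
def BranchingBisimilar (L : LTS S A) (s t : S) : Prop :=
  ∃ R, L.IsBranchingBisim R ∧ R s t

/-- A symmetric relation `R` is a delay bisimulation. -/
def IsDelayBisim (L : LTS S A) (R : S → S → Prop) : Prop :=
  (∀ s t, R s t → R t s) ∧
  ∀ s t a s', R s t → L.Trans s a s' →
    (a = L.tau ∧ R s' t) ∨
    ∃ t1 t', L.TauStar t t1 ∧ L.Trans t1 a t' ∧ R s' t'

/-- The generalised weak transition `s ↠_{x,R,t} s'`: a weak transition `s ↠ s'`,
which in case `x = b` additionally satisfies `t R s` and `t R s'`. -/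
def GenTauStar (L : LTS S A) (x : XY) (R : S → S → Prop) (t : S) (s s' : S) : Prop :=
  L.TauStar s s' ∧ (x = XY.b → R t s ∧ R t s')

/-- The strong generalised weak transition `s ⟹_{x,R,t} s'`: a weak transition
`s ↠ s'`, which in case `x = b` is witnessed by a finite τ-path all of whose states
are related to `t` by `R`. -/
def SGenTauStar (L : LTS S A) (x : XY) (R : S → S → Prop) (t : S) (s s' : S) : Prop :=
  L.TauStar s s' ∧
  (x = XY.b → R t s ∧ Relation.ReflTransGen (fun u u' => L.TauStep u u' ∧ R t u') s s')

/-- A symmetric relation `R` is an `(x,y)`-generic bisimulation. -/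
def IsGenBisim (L : LTS S A) (x y : XY) (R : S → S → Prop) : Prop :=
  (∀ s t, R s t → R t s) ∧
  ∀ s t a s', R s t → L.Trans s a s' →
    (a = L.tau ∧ R s' t) ∨
    ∃ t1 t2 t', L.GenTauStar x R s t t1 ∧ L.Trans t1 a t2 ∧
      L.GenTauStar y R s' t2 t' ∧ R s' t'

/-- `(x,y)`-generic bisimilarity `≈_{(x,y)}`. -/
def GenBisimilar (L : LTS S A) (x y : XY) (s t : S) : Prop :=
  ∃ R, L.IsGenBisim x y R ∧ R s t

/-- A symmetric relation `R` is an `(x,y)`-generic bisimulation with explicit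
divergence (divergence condition D₄). -/
def IsGenBisimED (L : LTS S A) (x y : XY) (R : S → S → Prop) : Prop :=
  L.IsGenBisim x y R ∧
  ∀ s t, R s t → ∀ f : ℕ → S, f 0 = s → (∀ i, L.TauStep (f i) (f (i + 1))) →
    ∃ t' k, L.TauPlus t t' ∧ R (f k) t'

/-- `(x,y)`-generic bisimilarity with explicit divergence `≈ed_{(x,y)}`. -/
def GenBisimilarED (L : LTS S A) (x y : XY) (s t : S) : Prop :=
  ∃ R, L.IsGenBisimED x y R ∧ R s t

end LTS

/-- A relation `R` has the stuttering property: whenever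
`t₀ →τ t₁ →τ ⋯ →τ t_k` and `t₀ R t_k`, then `t_i R t_j` for all `0 ≤ i,j ≤ k`. -/
def StutteringProperty {S : Type u} {A : Type v} (L : LTS S A) (R : S → S → Prop) : Prop :=
  ∀ (k : ℕ) (t : ℕ → S),
    (∀ i < k, L.TauStep (t i) (t (i + 1))) → R (t 0) (t k) →
    ∀ i j, i ≤ k → j ≤ k → R (t i) (t j)

/-! ## Two-player games

A play is a maximal (finite or infinite) sequence of configurations connected by
moves, represented as `π : ℕ → Option C` which is `none` from the point (if any)
where the play has ended; a play may only end in a configuration whose owner is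
stuck. A strategy for a player is a (positional) function `σ : C → C` which is
required to pick a legal move at every configuration owned by that player admitting
at least one move; a play is consistent with `σ` if every move taken from a
configuration owned by that player follows `σ`. -/

section Games

variable {C : Type u}

/-- `π` is a maximal play of the game with move relation `move`. -/
def IsPlay (move : C → C → Prop) (π : ℕ → Option C) : Prop :=
  (∀ i c d, π i = some c → π (i + 1) = some d → move c d) ∧
  (∀ i c, π i = some c → π (i + 1) = none → ∀ d, ¬ move c d) ∧
  (∀ i, π i = none → π (i + 1) = none)

/-- The play `π` is consistent with strategy `σ` of the player owning the
configurations satisfying `owned`. -/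
def ConsistentWith (owned : C → Prop) (σ : C → C) (π : ℕ → Option C) : Prop :=
  ∀ i c d, π i = some c → owned c → π (i + 1) = some d → d = σ c

/-- `σ` is a valid strategy for the player owning the configurations satisfying
`owned`: it picks a legal move wherever a move exists. -/
def ValidStrategy (owned : C → Prop) (move : C → C → Prop) (σ : C → C) : Prop :=
  ∀ c, owned c → (∃ d, move c d) → move c (σ c)

/-- The play `π` is finite and ends in the configuration `c`. -/
def EndsAt (π : ℕ → Option C) (c : C) : Prop := ∃ i, π i = some c ∧ π (i + 1) = none

/-- The play `π` is infinite. -/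
def InfinitePlay (π : ℕ → Option C) : Prop := ∀ i, π i ≠ none

/-- The Büchi winning condition on infinite plays: the play passes through
infinitely many configurations carrying a `✓` reward. -/
def BuchiWin (reward : C → Prop) (π : ℕ → Option C) : Prop :=
  ∀ n, ∃ i, n ≤ i ∧ ∃ c, π i = some c ∧ reward c

/-- Duplicator wins the play `π`: either the play is finite and Spoiler is stuck,
or the play is infinite and satisfies the winning condition `infWin`. -/
def DupWinsPlay (dupOwned : C → Prop) (infWin : (ℕ → Option C) → Prop)
    (π : ℕ → Option C) : Prop :=
  (∃ c, EndsAt π c ∧ ¬ dupOwned c) ∨ (InfinitePlay π ∧ infWin π)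

/-- Spoiler wins the play `π` (all plays not won by Duplicator). -/
def SpWinsPlay (dupOwned : C → Prop) (infWin : (ℕ → Option C) → Prop)
    (π : ℕ → Option C) : Prop :=
  (∃ c, EndsAt π c ∧ dupOwned c) ∨ (InfinitePlay π ∧ ¬ infWin π)

/-- Duplicator wins the configuration `c`: she has a strategy winning all plays
starting in `c`. -/
def DupWins (dupOwned : C → Prop) (move : C → C → Prop)
    (infWin : (ℕ → Option C) → Prop) (c : C) : Prop :=
  ∃ σ : C → C, ValidStrategy dupOwned move σ ∧
    ∀ π, IsPlay move π → π 0 = some c → ConsistentWith dupOwned σ π →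
      DupWinsPlay dupOwned infWin π

/-- Spoiler wins the configuration `c`: he has a strategy winning all plays
starting in `c`. -/
def SpWins (dupOwned : C → Prop) (move : C → C → Prop)
    (infWin : (ℕ → Option C) → Prop) (c : C) : Prop :=
  ∃ σ : C → C, ValidStrategy (fun d => ¬ dupOwned d) move σ ∧
    ∀ π, IsPlay move π → π 0 = some c → ConsistentWith (fun d => ¬ dupOwned d) σ π →
      SpWinsPlay dupOwned infWin π

end Games

/-! ## The limited branching bisimulation (lbb) game -/

/-- Configurations of the lbb game: Spoiler-owned `⟨(s,t)⟩` and Duplicator-owned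
`⟨(s,t),(a,s')⟩`. -/
inductive LConf (S : Type u) (A : Type v)
  | sp (p : S × S)
  | dup (p : S × S) (c : A × S)

/-- Ownership in the lbb game. -/
def LConf.dupOwned {S : Type u} {A : Type v} : LConf S A → Prop
  | .sp _ => False
  | .dup _ _ => True

/-- Moves of the lbb game. -/
inductive LMove {S : Type u} {A : Type v} (L : LTS S A) : LConf S A → LConf S A → Prop
  | sp1 {s t a s'} (h : L.Trans s a s') :
      LMove L (LConf.sp (s, t)) (LConf.dup (s, t) (a, s'))
  | sp2 {s t a t'} (h : L.Trans t a t') :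
      LMove L (LConf.sp (s, t)) (LConf.dup (t, s) (a, t'))
  | dup1 {u v u'} :
      LMove L (LConf.dup (u, v) (L.tau, u')) (LConf.sp (u', v))
  | dup2 {u v a u' v'} (h : L.Trans v a v') :
      LMove L (LConf.dup (u, v) (a, u')) (LConf.sp (u', v'))
  | dup3 {u v a u' v'} (h : L.TauStep v v') :
      LMove L (LConf.dup (u, v) (a, u')) (LConf.sp (u, v'))

/-- `s ≡lb t`: Duplicator wins the lbb game from `⟨(s,t)⟩_S`; finite plays are won
by Duplicator iff Spoiler is stuck, and all infinite plays are won by Duplicator. -/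
def LTS.lbbEquiv {S : Type u} {A : Type v} (L : LTS S A) (s t : S) : Prop :=
  DupWins LConf.dupOwned (LMove L) (fun _ => True) (LConf.sp (s, t))

/-! ## The branching bisimulation (bb) game -/

/-- Configurations of the bb game: `⟨(s,t),c,r⟩` owned by Spoiler or Duplicator,
with challenge `c ∈ (A × S) ∪ {†}` (where `none` is `†`) and reward `r`. -/
inductive BConf (S : Type u) (A : Type v)
  | sp (p : S × S) (c : Option (A × S)) (r : Rw)
  | dup (p : S × S) (c : Option (A × S)) (r : Rw)

/-- Ownership in the bb game. -/
def BConf.dupOwned {S : Type u} {A : Type v} : BConf S A → Prop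
  | .sp _ _ _ => False
  | .dup _ _ _ => True

/-- The configuration carries a `✓` reward. -/
def BConf.reward {S : Type u} {A : Type v} : BConf S A → Prop
  | .sp _ _ r => r = Rw.check
  | .dup _ _ r => r = Rw.check

/-- Moves of the bb game. -/
inductive BMove {S : Type u} {A : Type v} (L : LTS S A) : BConf S A → BConf S A → Prop
  | sp1star {s t c r a s'} (h : L.Trans s a s') (hc : c = some (a, s') ∨ c = none) :
      BMove L (BConf.sp (s, t) c r) (BConf.dup (s, t) (some (a, s')) Rw.star)
  | sp1check {s t c r a s'} (h : L.Trans s a s')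
      (hc : ¬(c = some (a, s') ∨ c = none)) :
      BMove L (BConf.sp (s, t) c r) (BConf.dup (s, t) (some (a, s')) Rw.check)
  | sp2 {s t c r a t'} (h : L.Trans t a t') :
      BMove L (BConf.sp (s, t) c r) (BConf.dup (t, s) (some (a, t')) Rw.check)
  | dup1 {u v u' r} :
      BMove L (BConf.dup (u, v) (some (L.tau, u')) r) (BConf.sp (u', v) none Rw.check)
  | dup2 {u v a u' v' r} (h : L.Trans v a v') :
      BMove L (BConf.dup (u, v) (some (a, u')) r) (BConf.sp (u', v') none Rw.check)
  | dup3 {u v a u' v' r} (h : L.TauStep v v') :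
      BMove L (BConf.dup (u, v) (some (a, u')) r)
        (BConf.sp (u, v') (some (a, u')) Rw.star)

/-- `s ≡b t`: Duplicator wins the bb game from `⟨(s,t),†,*⟩_S`, where infinite
plays are won by Duplicator iff they yield infinitely many `✓` rewards. -/
def LTS.bbEquiv {S : Type u} {A : Type v} (L : LTS S A) (s t : S) : Prop :=
  DupWins BConf.dupOwned (BMove L) (BuchiWin BConf.reward) (BConf.sp (s, t) none Rw.star)

/-! ## The generic bisimulation (gb) game, and its explicit-divergence variant -/

/-- Configurations of the generic games: `⟨(s,t),c,m,r⟩` owned by Spoiler or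
Duplicator, with challenge `c ∈ (A × S) ∪ {†}`, partial match
`m ∈ (S × {☹,☺}) ∪ {†}` and reward `r`. -/
inductive GConf (S : Type u) (A : Type v)
  | sp (p : S × S) (c : Option (A × S)) (m : Option (S × Face)) (r : Rw)
  | dup (p : S × S) (c : Option (A × S)) (m : Option (S × Face)) (r : Rw)

/-- Ownership in the generic games. -/
def GConf.dupOwned {S : Type u} {A : Type v} : GConf S A → Prop
  | .sp _ _ _ _ => False
  | .dup _ _ _ _ => True

/-- The configuration carries a `✓` reward. -/
def GConf.reward {S : Type u} {A : Type v} : GConf S A → Prop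
  | .sp _ _ _ r => r = Rw.check
  | .dup _ _ _ r => r = Rw.check

/-- Moves of the `E`-generic bisimulation game. The parameter `rw1` is the reward
handed out by Duplicator's rule (1): `✓` in the gb game, `*` in the gbed game. -/
inductive GMove {S : Type u} {A : Type v} (L : LTS S A) (E : Set Face) (rw1 : Rw) :
    GConf S A → GConf S A → Prop
  | sp1 {s t c m r} (hc : c ≠ none) :
      GMove L E rw1 (GConf.sp (s, t) c m r) (GConf.dup (s, t) c m Rw.star)
  | sp2a {s t m r a s'} (h : L.Trans s a s') :
      GMove L E rw1 (GConf.sp (s, t) none m r)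
        (GConf.dup (s, t) (some (a, s')) (some (t, Face.frown)) Rw.star)
  | sp2b {s t c m r a s'} (h : L.Trans s a s') (hc : c ≠ some (a, s')) :
      GMove L E rw1 (GConf.sp (s, t) c m r)
        (GConf.dup (s, t) (some (a, s')) (some (t, Face.frown)) Rw.check)
  | sp3 {s t c m r a t'} (h : L.Trans t a t') :
      GMove L E rw1 (GConf.sp (s, t) c m r)
        (GConf.dup (t, s) (some (a, t')) (some (s, Face.frown)) Rw.check)
  | dup1 {u v u' vb f r} :
      GMove L E rw1 (GConf.dup (u, v) (some (L.tau, u')) (some (vb, f)) r)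
        (GConf.sp (u', vb) none none rw1)
  | dup2a {u v a u' vb v' r} (h : L.Trans vb a v') :
      GMove L E rw1 (GConf.dup (u, v) (some (a, u')) (some (vb, Face.frown)) r)
        (GConf.sp (u', v') (some (a, u')) (some (v', Face.smile)) Rw.star)
  | dup2b {u v a u' vb v' r} (h : L.Trans vb a v') :
      GMove L E rw1 (GConf.dup (u, v) (some (a, u')) (some (vb, Face.frown)) r)
        (GConf.sp (u', v') none none Rw.check)
  | dup2c {u v a u' vb v' r} (h : L.Trans vb a v') (hE : Face.smile ∈ E) :
      GMove L E rw1 (GConf.dup (u, v) (some (a, u')) (some (vb, Face.frown)) r)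
        (GConf.sp (u, v) (some (a, u')) (some (v', Face.smile)) Rw.star)
  | dup3a {u v a u' vb f v' r} (h : L.TauStep vb v') :
      GMove L E rw1 (GConf.dup (u, v) (some (a, u')) (some (vb, f)) r)
        (GConf.sp (u, v') (some (a, u')) (some (v', f)) Rw.star)
  | dup3b {u v a u' vb v' r} (h : L.TauStep vb v') :
      GMove L E rw1 (GConf.dup (u, v) (some (a, u')) (some (vb, Face.smile)) r)
        (GConf.sp (u', v') none none Rw.check)
  | dup3c {u v a u' vb f v' r} (h : L.TauStep vb v') (hE : f ∈ E) :
      GMove L E rw1 (GConf.dup (u, v) (some (a, u')) (some (vb, f)) r)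
        (GConf.sp (u, v) (some (a, u')) (some (v', f)) Rw.star)

/-- `E(x,y) ⊆ {☹,☺}`: the smallest set containing `☹` when `x = o` and `☺` when
`y = o`. -/
def Exy (x y : XY) : Set Face :=
  {f | (f = Face.frown ∧ x = XY.o) ∨ (f = Face.smile ∧ y = XY.o)}

/-- `s ≡_E t`: Duplicator wins the `E`-generic bisimulation game from
`⟨(s,t),†,†,*⟩_S`; infinite plays are won by Duplicator iff they yield infinitely
many `✓` rewards. -/
def LTS.gbEquiv {S : Type u} {A : Type v} (L : LTS S A) (E : Set Face) (s t : S) : Prop :=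
  DupWins GConf.dupOwned (GMove L E Rw.check) (BuchiWin GConf.reward)
    (GConf.sp (s, t) none none Rw.star)

/-- `s ≡ed_E t`: Duplicator wins the `E`-generic bisimulation with explicit
divergence game from `⟨(s,t),†,†,*⟩_S`. -/
def LTS.gbedEquiv {S : Type u} {A : Type v} (L : LTS S A) (E : Set Face) (s t : S) : Prop :=
  DupWins GConf.dupOwned (GMove L E Rw.star) (BuchiWin GConf.reward)
    (GConf.sp (s, t) none none Rw.star)

/-- The abstraction function `f(⟨(s,t),c,m,r⟩) = ⟨(s,t),c,r⟩` from configurations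
of the generic game to configurations of the bb game, preserving ownership. -/
def fabs {S : Type u} {A : Type v} : GConf S A → BConf S A
  | .sp p c _ r => .sp p c r
  | .dup p c _ r => .dup p c r


/-! ### Auxiliary development for the stuttering property (semi-generic bisimulations) -/

section StutterAux

variable {S : Type u} {A : Type v}

/-- The relaxed (semi) matching condition. -/
def SemiMove (L : LTS S A) (x y : XY) (R : S → S → Prop) (s t : S) (a : A) (s' : S) : Prop :=
  (a = L.tau ∧ ∃ th, L.TauStar t th ∧ (x = XY.b → R s th) ∧ R s' th) ∨
  (∃ t1 t2 t', L.GenTauStar x R s t t1 ∧ L.Trans t1 a t2 ∧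
    L.GenTauStar y R s' t2 t' ∧ R s' t')

/-- Semi-generic bisimulations (à la Basten). -/
def IsSemiBisim (L : LTS S A) (x y : XY) (R : S → S → Prop) : Prop :=
  (∀ s t, R s t → R t s) ∧
  ∀ s t a s', R s t → L.Trans s a s' → SemiMove L x y R s t a s'

/-- Semi-generic bisimilarity. -/
def SB (L : LTS S A) (x y : XY) (s t : S) : Prop :=
  ∃ R, IsSemiBisim L x y R ∧ R s t

lemma genTauStar_mono {L : LTS S A} {x : XY} {R Q : S → S → Prop}
    (h : ∀ a b, R a b → Q a b) {t s s' : S} (hg : L.GenTauStar x R t s s') :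
    L.GenTauStar x Q t s s' :=
  ⟨hg.1, fun hx => ⟨h _ _ ((hg.2 hx).1), h _ _ ((hg.2 hx).2)⟩⟩

lemma semiMove_mono {L : LTS S A} {x y : XY} {R Q : S → S → Prop}
    (h : ∀ a b, R a b → Q a b) {s t a s'} (hm : SemiMove L x y R s t a s') :
    SemiMove L x y Q s t a s' := by
  rcases hm with ⟨ha, th, h1, h2, h3⟩ | ⟨t1, t2, t', h1, h2, h3, h4⟩
  · exact Or.inl ⟨ha, th, h1, fun hx => h _ _ (h2 hx), h _ _ h3⟩
  · exact Or.inr ⟨t1, t2, t', genTauStar_mono h h1, h2, genTauStar_mono h h3, h _ _ h4⟩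

lemma isGenBisim_isSemiBisim {L : LTS S A} {x y : XY} {R : S → S → Prop}
    (h : L.IsGenBisim x y R) : IsSemiBisim L x y R := by
  refine ⟨h.1, fun s t a s' hst hmove => ?_⟩
  rcases h.2 s t a s' hst hmove with ⟨ha, hR⟩ | hfull
  · exact Or.inl ⟨ha, t, Relation.ReflTransGen.refl, fun _ => hst, hR⟩
  · exact Or.inr hfull

lemma sb_isSemiBisim (L : LTS S A) (x y : XY) : IsSemiBisim L x y (SB L x y) := by
  constructor
  · rintro s t ⟨R, hR, hst⟩; exact ⟨R, hR, hR.1 _ _ hst⟩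
  · rintro s t a s' ⟨R, hR, hst⟩ hmove
    exact semiMove_mono (fun a b hab => ⟨R, hR, hab⟩) (hR.2 s t a s' hst hmove)

lemma sb_symm {L : LTS S A} {x y : XY} {s t : S} (h : SB L x y s t) : SB L x y t s :=
  (sb_isSemiBisim L x y).1 _ _ h

lemma sb_refl (L : LTS S A) (x y : XY) (s : S) : SB L x y s s := by
  refine ⟨Eq, ⟨fun a b h => h.symm, ?_⟩, rfl⟩
  rintro u v a u' rfl hmove
  exact Or.inr ⟨u, u', u', ⟨Relation.ReflTransGen.refl, fun _ => ⟨rfl, rfl⟩⟩, hmove,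
    ⟨Relation.ReflTransGen.refl, fun _ => ⟨rfl, rfl⟩⟩, rfl⟩

/-- Lemma A: a weak transition on the left can be mimicked on the right. -/
lemma lemmaA {L : LTS S A} {x y : XY} {R : S → S → Prop}
    (hR : IsSemiBisim L x y R) {s s' t : S} (hst : R s t)
    (h : L.TauStar s s') : ∃ t', L.TauStar t t' ∧ R s' t' := by
  induction h with
  | refl => exact ⟨t, Relation.ReflTransGen.refl, hst⟩
  | tail _ hstep ih =>
    rcases ih with ⟨u, htu, hRu⟩
    rcases hR.2 _ _ _ _ hRu hstep with ⟨_, th, h1, _, h3⟩ | ⟨t1, t2, t', h1, h2, h3, h4⟩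
    · exact ⟨th, htu.trans h1, h3⟩
    · exact ⟨t', htu.trans ((h1.1.tail h2).trans h3.1), h4⟩

/-- Composition of two semi-generic bisimulations satisfies the semi move condition. -/
lemma compMove {L : LTS S A} {x y : XY} {R R' : S → S → Prop}
    (hR : IsSemiBisim L x y R) (hR' : IsSemiBisim L x y R')
    {s m t : S} {a : A} {s' : S} (hsm : R s m) (hmt : R' m t)
    (hmove : L.Trans s a s') :
    SemiMove L x y (fun u v => ∃ w, R u w ∧ R' w v) s t a s' := by
  rcases hR.2 s m a s' hsm hmove with ⟨ha, mh, hmmh, hxm, hs'mh⟩ |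
    ⟨m1, m2, m', hg1, hstep, hg2, hs'm'⟩
  · -- R took the τ-option
    rcases lemmaA hR' hmt hmmh with ⟨th, htth, hmh⟩
    exact Or.inl ⟨ha, th, htth, fun hx => ⟨mh, hxm hx, hmh⟩, ⟨mh, hs'mh, hmh⟩⟩
  · -- R took the full option
    rcases lemmaA hR' hmt hg1.1 with ⟨u1, htu1, hm1u1⟩
    rcases hR'.2 m1 u1 a m2 hm1u1 hstep with ⟨ha, uh, huuh, hxu, hm2uh⟩ |
      ⟨v1, v2, v', hg1', hstep', hg2', hm2v'⟩
    · -- R' took the τ-option on the real step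
      rcases lemmaA hR' hm2uh hg2.1 with ⟨u', huhu', hm'u'⟩
      cases hx : x with
      | o =>
        exact Or.inl ⟨ha, u', htu1.trans (huuh.trans huhu'),
          fun hxb => absurd hxb (by decide), ⟨m', hs'm', hm'u'⟩⟩
      | b =>
        have hsuh : ∃ w, R s w ∧ R' w uh := ⟨m1, (hg1.2 hx).2, hxu hx⟩
        have hst' : ∃ w, R s w ∧ R' w t := ⟨m, hsm, hmt⟩
        cases hy : y with
        | b =>
          exact Or.inl ⟨ha, uh, htu1.trans huuh, fun _ => hsuh,
            ⟨m2, (hg2.2 hy).1, hm2uh⟩⟩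
        | o =>
          rcases huhu'.cases_head with rfl | ⟨z, hz1, hz2⟩
          · exact Or.inl ⟨ha, uh, htu1.trans huuh, fun _ => hsuh, ⟨m', hs'm', hm'u'⟩⟩
          · refine Or.inr ⟨uh, z, u', ⟨htu1.trans huuh, fun _ => ⟨hst', hsuh⟩⟩,
              ha ▸ hz1, ⟨hz2, fun hyb => absurd hyb (by decide)⟩,
              ⟨m', hs'm', hm'u'⟩⟩
    · -- R' took the full option
      rcases lemmaA hR' hm2v' hg2.1 with ⟨w', hvw', hm'w'⟩
      refine Or.inr ⟨v1, v2, w', ⟨htu1.trans hg1'.1, fun hx =>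
        ⟨⟨m, hsm, hmt⟩, ⟨m1, (hg1.2 hx).2, (hg1'.2 hx).2⟩⟩⟩, hstep',
        ⟨hg2'.1.trans hvw', fun hy =>
          ⟨⟨m2, (hg2.2 hy).1, (hg2'.2 hy).1⟩, ⟨m', (hg2.2 hy).2, hm'w'⟩⟩⟩,
        ⟨m', hs'm', hm'w'⟩⟩

/-- Semi-generic bisimilarity is transitive. -/
lemma sb_trans {L : LTS S A} {x y : XY} {s m t : S}
    (h1 : SB L x y s m) (h2 : SB L x y m t) : SB L x y s t := by
  rcases h1 with ⟨R, hR, hsm⟩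
  rcases h2 with ⟨R', hR', hmt⟩
  refine ⟨fun u v => (∃ w, R u w ∧ R' w v) ∨ (∃ w, R' u w ∧ R w v), ⟨?_, ?_⟩,
    Or.inl ⟨m, hsm, hmt⟩⟩
  · rintro u v (⟨w, h1, h2⟩ | ⟨w, h1, h2⟩)
    · exact Or.inr ⟨w, hR'.1 _ _ h2, hR.1 _ _ h1⟩
    · exact Or.inl ⟨w, hR.1 _ _ h2, hR'.1 _ _ h1⟩
  · rintro u v a u' (⟨w, h1, h2⟩ | ⟨w, h1, h2⟩) hmove
    · exact semiMove_mono (fun a b hab => Or.inl hab) (compMove hR hR' h1 h2 hmove)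
    · exact semiMove_mono (fun a b hab => Or.inr hab) (compMove hR' hR h1 h2 hmove)

/-- The sandwich lemma for semi-generic bisimilarity. -/
lemma sb_sandwich {L : LTS S A} {x y : XY} {p u q : S}
    (hpq : SB L x y p q) (h1 : L.TauStar p u) (h2 : L.TauStar u q) : SB L x y u q := by
  set Rel : S → S → Prop := fun a b =>
    SB L x y a b ∨ (∃ c, SB L x y c b ∧ L.TauStar c a ∧ L.TauStar a b) ∨
      (∃ c, SB L x y c a ∧ L.TauStar c b ∧ L.TauStar b a) with hRel
  refine ⟨Rel, ⟨?_, ?_⟩, Or.inr (Or.inl ⟨p, hpq, h1, h2⟩)⟩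
  · rintro a b (h | ⟨c, h1, h2, h3⟩ | ⟨c, h1, h2, h3⟩)
    · exact Or.inl (sb_symm h)
    · exact Or.inr (Or.inr ⟨c, h1, h2, h3⟩)
    · exact Or.inr (Or.inl ⟨c, h1, h2, h3⟩)
  · rintro u t a u' (hsb | ⟨c, hc, hcu, hut⟩ | ⟨c, hc, hct, htu⟩) hmove
    · -- a plain SB pair
      exact semiMove_mono (fun a b hab => Or.inl hab)
        ((sb_isSemiBisim L x y).2 u t a u' hsb hmove)
    · -- forward sandwich pair: c SB t, c ↠ u ↠ t
      rcases lemmaA (sb_isSemiBisim L x y) hc hcu with ⟨mm, htm, hum⟩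
      rcases (sb_isSemiBisim L x y).2 u mm a u' hum hmove with
        ⟨ha, mh, hmmh, hxm, hu'mh⟩ | ⟨m1, m2, m', hg1, hstep, hg2, hu'm'⟩
      · exact Or.inl ⟨ha, mh, htm.trans hmmh, fun hx => Or.inl (hxm hx),
          Or.inl hu'mh⟩
      · refine Or.inr ⟨m1, m2, m', ⟨htm.trans hg1.1, fun hx =>
          ⟨Or.inr (Or.inl ⟨c, hc, hcu, hut⟩), Or.inl (hg1.2 hx).2⟩⟩, hstep,
          ⟨hg2.1, fun hy => ⟨Or.inl (hg2.2 hy).1, Or.inl (hg2.2 hy).2⟩⟩,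
          Or.inl hu'm'⟩
    · -- converse sandwich pair: c SB u, c ↠ t ↠ u; the challenger is between
      refine Or.inr ⟨u, u', u', ⟨htu, fun hx =>
        ⟨Or.inr (Or.inr ⟨c, hc, hct, htu⟩), Or.inl (sb_refl L x y u)⟩⟩, hmove,
        ⟨Relation.ReflTransGen.refl, fun hy =>
          ⟨Or.inl (sb_refl L x y u'), Or.inl (sb_refl L x y u')⟩⟩,
        Or.inl (sb_refl L x y u')⟩

/-- Semi-generic bisimilarity is itself an `(x,y)`-generic bisimulation. -/
lemma sb_isGenBisim (L : LTS S A) (x y : XY) : L.IsGenBisim x y (SB L x y) := by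
  refine ⟨fun s t h => sb_symm h, fun s t a s' hst hmove => ?_⟩
  rcases (sb_isSemiBisim L x y).2 s t a s' hst hmove with
    ⟨ha, th, htth, hxs, hs'th⟩ | hfull
  · -- relaxed τ-option: turn it into a genuine option
    rcases htth.cases_tail with rfl | ⟨z, htz, hz⟩
    · exact Or.inl ⟨ha, hs'th⟩
    · refine Or.inr ⟨z, th, th, ⟨htz, fun hx => ⟨hst, ?_⟩⟩, ha ▸ hz,
        ⟨Relation.ReflTransGen.refl, fun _ => ⟨hs'th, hs'th⟩⟩, hs'th⟩
      -- need s SB z, where t ↠ z →τ th and s SB t, s SB th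
      have htth' : SB L x y t th := sb_trans (sb_symm hst) (hxs hx)
      have hzth : SB L x y z th := sb_sandwich htth' htz (Relation.ReflTransGen.single hz)
      exact sb_trans (hxs hx) (sb_symm hzth)
  · exact Or.inr hfull

lemma tauStar_of_path {L : LTS S A} {k : ℕ} {t : ℕ → S}
    (hstep : ∀ i < k, L.TauStep (t i) (t (i + 1))) {i j : ℕ} (hij : i ≤ j) (hj : j ≤ k) :
    L.TauStar (t i) (t j) := by
  induction j with
  | zero => cases Nat.le_zero.1 hij; exact Relation.ReflTransGen.refl
  | succ n ih =>
    rcases Nat.lt_or_ge i (n + 1) with h | h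
    · exact (ih (Nat.lt_succ_iff.1 h) (le_of_lt hj)).tail (hstep n hj)
    · cases le_antisymm hij h; exact Relation.ReflTransGen.refl

end StutterAux

/-- For all `x, y ∈ {o,b}`, `(x,y)`-generic bisimilarity satisfies
the stuttering property. -/
theorem genBisimilar_stutteringProperty {S : Type u} {A : Type v} (L : LTS S A)
    (x y : XY) :
    StutteringProperty L (L.GenBisimilar x y) := by
  intro k t hstep h0k i j hi hj
  -- pass to semi-generic bisimilarity
  have h0k' : SB L x y (t 0) (t k) := by
    rcases h0k with ⟨R, hR, h⟩
    exact ⟨R, isGenBisim_isSemiBisim hR, h⟩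
  have key : ∀ i, i ≤ k → SB L x y (t i) (t k) := fun i hi =>
    sb_sandwich h0k' (tauStar_of_path hstep (Nat.zero_le i) hi)
      (tauStar_of_path hstep hi le_rfl)
  have hij : SB L x y (t i) (t j) := sb_trans (key i hi) (sb_symm (key j hj))
  exact ⟨SB L x y, sb_isGenBisim L x y, hij⟩

end GamesBisim
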